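/- arXiv:1908.09463 — 2 statements merged into one kernel-verified Lean document; each statement's English description precedes it below -/
import Mathlib

section
/- Let p be an odd prime and k > 2 an integer, let n = p^k, and let G be the cyclic subgroup of (Z_n)^× generated by the unit e = p^{k−1} − 1. Then for every α ∈ Z_n, the cardinality of the coset αG = {α·g : g ∈ G} equals 1 if α = 0, equals 2 if α ≠ 0 and p divides α, and equals 2p if p does not divide α. -/
/-- The coset (orbit) `xG = {x * g : g ∈ G}` of `x : R` under a subgroup `G` of `Rˣ`. -/
def coset {R : Type*} [Monoid R] (G : Subgroup Rˣ) (x : R) : Set R :=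
  {y | ∃ g ∈ G, y = x * (g : R)}

/-!
The generator is `e = t - 1` with `t = p ^ (k - 1)`, and `t` is a square-zero element killed by
`p`. Hence `1 - t` is unipotent of order `p`, so `e = -(1 - t)` has order `2 p`, and multiplication
by a unit is injective, which gives `2 p` for units. If `p ∣ α` then `α t = 0`, so `e` acts on `α`
as `-1` and the coset is `{α, -α}`, of size `2` because `p ^ k` is odd.
-/

section SquareZero

theorem one_add_pow_of_mul_self_eq_zero {R : Type*} [Semiring R] {t : R} (ht : t * t = 0)
    (n : ℕ) : (1 + t) ^ n = 1 + n * t := by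
  induction n with
  | zero => simp
  | succ n ih =>
    rw [pow_succ, ih]
    simp only [mul_add, add_mul, mul_one, one_mul, mul_assoc, ht, mul_zero, add_zero,
      Nat.cast_succ, add_assoc]

variable {R : Type*} [CommRing R] {t : R} {p : ℕ} [Fact p.Prime]

theorem orderOf_one_add_of_mul_self_eq_zero (ht : t * t = 0) (hpt : (p : R) * t = 0)
    (ht0 : t ≠ 0) : orderOf (1 + t) = p :=
  orderOf_eq_prime (by rw [one_add_pow_of_mul_self_eq_zero ht, hpt, add_zero])
    (by simpa using ht0)

theorem orderOf_sub_one_of_mul_self_eq_zero (hchar : ringChar R ≠ 2) (hp2 : p ≠ 2)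
    (ht : t * t = 0) (hpt : (p : R) * t = 0) (ht0 : t ≠ 0) : orderOf (t - 1) = 2 * p := by
  have : Nontrivial R := nontrivial_of_ne t 0 ht0
  have hunip : orderOf (1 + -t) = p :=
    orderOf_one_add_of_mul_self_eq_zero (by rwa [neg_mul_neg]) (by rwa [mul_neg, neg_eq_zero])
      (neg_ne_zero.mpr ht0)
  have hcop : (orderOf (-1 : R)).Coprime (orderOf (1 + -t)) := by
    rw [orderOf_neg_one, if_neg hchar, hunip]
    exact (Nat.coprime_primes Nat.prime_two Fact.out).mpr hp2.symm
  rw [show t - 1 = -1 * (1 + -t) by ring,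
    (Commute.neg_one_left _).orderOf_mul_eq_mul_orderOf_of_coprime hcop, orderOf_neg_one,
    if_neg hchar, hunip]

end SquareZero

theorem coset_zero {R : Type*} [MonoidWithZero R] (G : Subgroup Rˣ) : coset G (0 : R) = {0} := by
  ext y
  simp only [coset, Set.mem_ofPred_eq, zero_mul, Set.mem_singleton_iff]
  exact ⟨fun ⟨_, _, hy⟩ => hy, fun hy => ⟨1, G.one_mem, hy⟩⟩

theorem ncard_coset_of_isLeftRegular {R : Type*} [Monoid R] (G : Subgroup Rˣ) {α : R}
    (hα : IsLeftRegular α) : (coset G α).ncard = Nat.card G := by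
  have himage : coset G α = (fun u : Rˣ => α * u) '' G := by
    ext y
    simp only [coset, Set.mem_ofPred_eq, Set.mem_image, SetLike.mem_coe, eq_comm]
  rw [himage, Set.ncard_image_of_injective _ fun u v huv => Units.ext (hα huv),
    ← Nat.card_coe_set_eq]
  rfl

theorem coset_zpowers_eq_pair {R : Type*} [Ring R] {e : Rˣ} {α : R} (h : α * e = -α) :
    coset (Subgroup.zpowers e) α = {α, -α} := by
  have hinv : α * ↑e⁻¹ = -α := by
    rw [← neg_eq_iff_eq_neg, ← neg_mul, ← h, mul_assoc, Units.mul_inv, mul_one]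
  have hstep : ∀ {u : Rˣ}, α * u = -α → ∀ a : Rˣ,
      α * a = α ∨ α * a = -α → α * ↑(a * u) = α ∨ α * ↑(a * u) = -α := by
    intro u hu a ha
    rw [Units.val_mul, ← mul_assoc]
    rcases ha with ha | ha <;> rw [ha]
    · exact Or.inr hu
    · rw [neg_mul, hu, neg_neg]; exact Or.inl rfl
  ext y
  simp only [coset, Set.mem_ofPred_eq, Set.mem_insert_iff, Set.mem_singleton_iff]
  constructor
  · rintro ⟨g, hg, rfl⟩
    obtain ⟨n, rfl⟩ := Subgroup.mem_zpowers_iff.mp hg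
    exact zpow_induction_right (by simp) (hstep h) (hstep hinv) n
  · rintro (rfl | rfl)
    · exact ⟨1, one_mem _, by simp⟩
    · exact ⟨e, Subgroup.mem_zpowers e, h.symm⟩

namespace ZMod

variable {p k : ℕ}

theorem natCast_mul_pow_pred_eq_zero (hk : 0 < k) :
    (p : ZMod (p ^ k)) * (p : ZMod (p ^ k)) ^ (k - 1) = 0 := by
  rw [← pow_succ', Nat.sub_add_cancel hk, ← Nat.cast_pow, natCast_self]

theorem pow_pred_mul_self_eq_zero (hk : 2 ≤ k) :
    (p : ZMod (p ^ k)) ^ (k - 1) * (p : ZMod (p ^ k)) ^ (k - 1) = 0 := by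
  rw [← pow_add, show k - 1 + (k - 1) = k + (k - 2) by omega, pow_add, ← Nat.cast_pow,
    natCast_self, zero_mul]

theorem pow_pred_ne_zero (hp : p.Prime) (hk : 0 < k) : (p : ZMod (p ^ k)) ^ (k - 1) ≠ 0 := by
  rw [← Nat.cast_pow, Ne, natCast_eq_zero_iff]
  exact Nat.pow_dvd_pow_iff_le_right hp.one_lt |>.not.mpr (by omega)

theorem mul_pow_pred_eq_zero_of_dvd (hk : 0 < k) {α : ZMod (p ^ k)}
    (h : (p : ZMod (p ^ k)) ∣ α) : α * (p : ZMod (p ^ k)) ^ (k - 1) = 0 := by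
  obtain ⟨β, rfl⟩ := h
  rw [mul_right_comm, natCast_mul_pow_pred_eq_zero hk, zero_mul]

theorem isUnit_of_not_natCast_dvd (hp : p.Prime) (hk : 0 < k) {α : ZMod (p ^ k)}
    (h : ¬ (p : ZMod (p ^ k)) ∣ α) : IsUnit α := by
  have : NeZero (p ^ k) := ⟨pow_ne_zero k hp.ne_zero⟩
  rw [← natCast_zmod_val α, isUnit_natCast_iff_not_dvd_pow hp hk]
  exact fun hdvd => h (by simpa using Nat.cast_dvd_cast (α := ZMod (p ^ k)) hdvd)

theorem neg_ne_self_of_odd {n : ℕ} (hn : Odd n) {α : ZMod n} (hα : α ≠ 0) : -α ≠ α := by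
  rw [Ne, neg_eq_self_iff, not_or]
  obtain ⟨m, rfl⟩ := hn
  exact ⟨hα, by omega⟩

end ZMod

theorem stmt_12 (p : ℕ) (hp : p.Prime) (hodd : p ≠ 2) (k : ℕ) (hk : 2 < k)
    (e : (ZMod (p ^ k))ˣ)
    (he : (e : ZMod (p ^ k)) = (p : ZMod (p ^ k)) ^ (k - 1) - 1) :
    ∀ α : ZMod (p ^ k),
      (α = 0 → (coset (Subgroup.zpowers e) α).ncard = 1) ∧
      (α ≠ 0 → (p : ZMod (p ^ k)) ∣ α → (coset (Subgroup.zpowers e) α).ncard = 2) ∧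
      (¬ (p : ZMod (p ^ k)) ∣ α → (coset (Subgroup.zpowers e) α).ncard = 2 * p) := by
  have : Fact p.Prime := ⟨hp⟩
  have hodd_pow : Odd (p ^ k) := (hp.odd_of_ne_two hodd).pow
  have hchar : ringChar (ZMod (p ^ k)) ≠ 2 := by
    rw [ZMod.ringChar_zmod_n]
    exact fun h => Nat.not_even_iff_odd.mpr hodd_pow (h ▸ even_two)
  have horder : orderOf e = 2 * p := by
    rw [← orderOf_units, he]
    exact orderOf_sub_one_of_mul_self_eq_zero hchar hodd (ZMod.pow_pred_mul_self_eq_zero hk.le)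
      (ZMod.natCast_mul_pow_pred_eq_zero (by omega)) (ZMod.pow_pred_ne_zero hp (by omega))
  intro α
  refine ⟨?_, fun hα hdvd => ?_, fun hndvd => ?_⟩
  · rintro rfl
    rw [coset_zero, Set.ncard_singleton]
  · have hneg : α * e = -α := by
      rw [he, mul_sub, ZMod.mul_pow_pred_eq_zero_of_dvd (by omega) hdvd, zero_sub, mul_one]
    rw [coset_zpowers_eq_pair hneg, Set.ncard_pair (ZMod.neg_ne_self_of_odd hodd_pow hα).symm]
  · have hunit := ZMod.isUnit_of_not_natCast_dvd hp (by omega) hndvd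
    rw [ncard_coset_of_isLeftRegular _ hunit.isRegular.left, Nat.card_zpowers, horder]
end

section
/- Let s ≥ 1 be an integer, p a prime, and k ≥ 2s an integer; let n = p^k and let G be the cyclic subgroup of (Z_n)^× generated by the unit e = p^{k−s} + 1. For x ∈ Z_n let xG = {x·g : g ∈ G}. Then (i) the number of distinct cosets {xG : x ∈ Z_n} equals (s·p + p − s)·p^{k−s−1}, and (ii) for every nonzero α ∈ Z_n, the cardinality of {x ∈ Z_n : (x+α)G = xG} lies in the set ⋃_{i=0}^{s−1} {0, Σ_{j=0}^{i} φ(p^{k−j})}, where φ is the Euler totient function; in particular the coset index function is a (p^k, (sp+p−s)p^{k−s−1}, ⋃_{i=0}^{s−1}{0, Σ_{j=0}^{i} φ(p^{k−j})}) zero-difference function. -/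
lemma mem_coset_self {R : Type*} [Monoid R] (G : Subgroup Rˣ) (x : R) : x ∈ coset G x :=
  ⟨1, G.one_mem, by simp⟩

lemma coset_eq_of_mem {R : Type*} [Monoid R] {G : Subgroup Rˣ} {x y : R}
    (h : y ∈ coset G x) : coset G y = coset G x := by
  obtain ⟨g₀, hg₀, rfl⟩ := h
  ext z
  constructor
  · rintro ⟨g, hg, rfl⟩
    exact ⟨g₀ * g, G.mul_mem hg₀ hg, by rw [Units.val_mul, mul_assoc]⟩
  · rintro ⟨g, hg, rfl⟩
    refine ⟨g₀⁻¹ * g, G.mul_mem (G.inv_mem hg₀) hg, ?_⟩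
    rw [Units.val_mul, mul_assoc, ← mul_assoc (g₀ : R), ← Units.val_mul, mul_inv_cancel]
    simp

lemma coset_eq_iff {R : Type*} [Monoid R] {G : Subgroup Rˣ} {x y : R} :
    coset G y = coset G x ↔ y ∈ coset G x :=
  ⟨fun h => h ▸ mem_coset_self G y, coset_eq_of_mem⟩

-- divisibility vs val
lemma zmod_pow_dvd_iff {p : ℕ} (hp : p.Prime) {a k : ℕ} (ha : a ≤ k) (y : ZMod (p ^ k)) :
    (p : ZMod (p ^ k)) ^ a ∣ y ↔ p ^ a ∣ y.val := by
  haveI : NeZero (p ^ k) := ⟨pow_ne_zero k hp.pos.ne'⟩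
  have hd : p ^ a ∣ p ^ k := pow_dvd_pow p ha
  constructor
  · rintro ⟨t, rfl⟩
    have h1 : (p : ZMod (p ^ k)) ^ a * t = ((p ^ a * t.val : ℕ) : ZMod (p ^ k)) := by
      push_cast [ZMod.natCast_zmod_val]
      ring
    rw [h1, ZMod.val_natCast, Nat.dvd_mod_iff hd]
    exact Dvd.intro _ rfl
  · rintro ⟨c, hc⟩
    refine ⟨(c : ZMod (p ^ k)), ?_⟩
    have := ZMod.natCast_zmod_val y
    rw [← this, hc]
    push_cast
    ring

-- counting multiples
lemma zmod_card_pow_dvd {p : ℕ} (hp : p.Prime) {a k : ℕ} (ha : a ≤ k) :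
    {y : ZMod (p ^ k) | (p : ZMod (p ^ k)) ^ a ∣ y}.ncard = p ^ (k - a) := by
  haveI : NeZero (p ^ k) := ⟨pow_ne_zero k hp.pos.ne'⟩
  haveI : NeZero (p ^ (k - a)) := ⟨pow_ne_zero _ hp.pos.ne'⟩
  classical
  set f : ZMod (p ^ (k - a)) → ZMod (p ^ k) := fun z => ((p ^ a * z.val : ℕ) : ZMod (p ^ k))
    with hf
  have hlt : ∀ z : ZMod (p ^ (k - a)), p ^ a * z.val < p ^ k := by
    intro z
    calc p ^ a * z.val < p ^ a * p ^ (k - a) :=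
          Nat.mul_lt_mul_of_le_of_lt (le_refl _) (ZMod.val_lt z) (pow_pos hp.pos a)
      _ = p ^ k := by rw [← pow_add]; congr 1; omega
  have hval : ∀ z : ZMod (p ^ (k - a)), (f z).val = p ^ a * z.val := fun z =>
    ZMod.val_cast_of_lt (hlt z)
  have hinj : Function.Injective f := by
    intro z z' h
    have h2 : p ^ a * z.val = p ^ a * z'.val := by rw [← hval z, ← hval z', h]
    have h3 : z.val = z'.val := Nat.eq_of_mul_eq_mul_left (pow_pos hp.pos a) h2
    rw [← ZMod.natCast_zmod_val z, ← ZMod.natCast_zmod_val z', h3]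
  have hrange : Set.range f = {y : ZMod (p ^ k) | (p : ZMod (p ^ k)) ^ a ∣ y} := by
    ext y
    constructor
    · rintro ⟨z, rfl⟩
      rw [Set.mem_setOf_eq, zmod_pow_dvd_iff hp ha, hval]
      exact Dvd.intro _ rfl
    · intro hy
      rw [Set.mem_setOf_eq, zmod_pow_dvd_iff hp ha] at hy
      obtain ⟨c, hc⟩ := hy
      have hclt : c < p ^ (k - a) := by
        have := ZMod.val_lt y
        rw [hc] at this
        have hpk : p ^ k = p ^ a * p ^ (k - a) := by rw [← pow_add]; congr 1; omega
        rw [hpk] at this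
        exact Nat.lt_of_mul_lt_mul_left this
      refine ⟨(c : ZMod (p ^ (k - a))), ?_⟩
      rw [hf]
      simp only []
      rw [ZMod.val_cast_of_lt hclt, ← hc, ZMod.natCast_zmod_val]
  calc {y : ZMod (p ^ k) | (p : ZMod (p ^ k)) ^ a ∣ y}.ncard
      = (Set.range f).ncard := by rw [hrange]
    _ = (↑(Finset.univ.image f) : Set (ZMod (p ^ k))).ncard := by
        rw [Finset.coe_image, Finset.coe_univ, Set.image_univ]
    _ = (Finset.univ.image f).card := Set.ncard_coe_finset _
    _ = Finset.univ.card := Finset.card_image_of_injective _ hinj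
    _ = p ^ (k - a) := by rw [Finset.card_univ, ZMod.card]

lemma zmod_pow_hi_eq_zero {p : ℕ} {a k : ℕ} (ha : k ≤ a) :
    (p : ZMod (p ^ k)) ^ a = 0 := by
  have : ((p ^ a : ℕ) : ZMod (p ^ k)) = 0 :=
    (ZMod.natCast_eq_zero_iff _ _).2 (pow_dvd_pow p ha)
  push_cast at this
  exact this

lemma exists_unit_decomp {p : ℕ} (hp : p.Prime) {a k : ℕ} {x : ZMod (p ^ k)}
    (h1 : (p : ZMod (p ^ k)) ^ a ∣ x) (h2 : ¬ (p : ZMod (p ^ k)) ^ (a + 1) ∣ x) :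
    a < k ∧ ∃ u : (ZMod (p ^ k))ˣ, x = (p : ZMod (p ^ k)) ^ a * u := by
  haveI : NeZero (p ^ k) := ⟨pow_ne_zero k hp.pos.ne'⟩
  have hak : a < k := by
    by_contra hc
    push_neg at hc
    obtain ⟨t, rfl⟩ := h1
    exact h2 (by rw [zmod_pow_hi_eq_zero hc, zero_mul]; exact dvd_zero _)
  refine ⟨hak, ?_⟩
  have hv1 : p ^ a ∣ x.val := (zmod_pow_dvd_iff hp hak.le x).1 h1
  obtain ⟨m, hm⟩ := hv1
  have hpm : ¬ p ∣ m := by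
    intro hdvd
    apply h2
    rw [zmod_pow_dvd_iff hp hak x]
    rw [hm, pow_succ]
    exact mul_dvd_mul_left _ hdvd
  have hcop : Nat.Coprime m (p ^ k) :=
    Nat.Coprime.pow_right _ ((Nat.Prime.coprime_iff_not_dvd hp).2 hpm).symm
  refine ⟨ZMod.unitOfCoprime m hcop, ?_⟩
  rw [ZMod.coe_unitOfCoprime, ← ZMod.natCast_zmod_val x, hm]
  push_cast
  ring

lemma coe_pow_e {s p k : ℕ} (hp : p.Prime) (hk : 2 * s ≤ k) (e : (ZMod (p ^ k))ˣ)
    (he : (e : ZMod (p ^ k)) = (p : ZMod (p ^ k)) ^ (k - s) + 1) (m : ℕ) :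
    ((e ^ m : (ZMod (p ^ k))ˣ) : ZMod (p ^ k))
      = 1 + (m : ZMod (p ^ k)) * (p : ZMod (p ^ k)) ^ (k - s) := by
  have hq2 : (p : ZMod (p ^ k)) ^ (k - s) * (p : ZMod (p ^ k)) ^ (k - s) = 0 := by
    rw [← pow_add]
    exact zmod_pow_hi_eq_zero (by omega)
  induction m with
  | zero => simp
  | succ m ih =>
    rw [pow_succ, Units.val_mul, ih, he]
    have hstep : (1 + (m : ZMod (p ^ k)) * (p : ZMod (p ^ k)) ^ (k - s))
          * ((p : ZMod (p ^ k)) ^ (k - s) + 1)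
        = 1 + ((m : ZMod (p ^ k)) + 1) * (p : ZMod (p ^ k)) ^ (k - s)
          + (m : ZMod (p ^ k))
            * ((p : ZMod (p ^ k)) ^ (k - s) * (p : ZMod (p ^ k)) ^ (k - s)) := by
      ring
    rw [hstep, hq2, mul_zero, add_zero]
    push_cast
    ring

lemma coset_zpowers_eq {s p k : ℕ} (hp : p.Prime) (hk : 2 * s ≤ k) (e : (ZMod (p ^ k))ˣ)
    (he : (e : ZMod (p ^ k)) = (p : ZMod (p ^ k)) ^ (k - s) + 1) (x : ZMod (p ^ k)) :
    coset (Subgroup.zpowers e) x = {y | x * (p : ZMod (p ^ k)) ^ (k - s) ∣ y - x} := by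
  haveI : NeZero (p ^ k) := ⟨pow_ne_zero k hp.pos.ne'⟩
  ext y
  constructor
  · rintro ⟨g, hg, rfl⟩
    rw [← (isOfFinOrder_of_finite e).mem_powers_iff_mem_zpowers] at hg
    obtain ⟨m, rfl⟩ := hg
    rw [coe_pow_e hp hk e he]
    refine ⟨(m : ZMod (p ^ k)), ?_⟩
    ring
  · rintro ⟨t, ht⟩
    refine ⟨e ^ t.val, Subgroup.pow_mem _ (Subgroup.mem_zpowers e) _, ?_⟩
    rw [coe_pow_e hp hk e he, ZMod.natCast_zmod_val]
    have : y = x + x * (p : ZMod (p ^ k)) ^ (k - s) * t := by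
      rw [← ht]; ring
    rw [this]; ring

lemma totient_pp {p : ℕ} (hp : p.Prime) {m : ℕ} (hm : 1 ≤ m) :
    Nat.totient (p ^ m) = p ^ m - p ^ (m - 1) := by
  rw [Nat.totient_prime_pow hp hm, Nat.mul_sub, mul_one, ← pow_succ]
  congr 2
  omega

lemma totient_sum {p : ℕ} (hp : p.Prime) {k : ℕ} :
    ∀ i : ℕ, i + 1 ≤ k →
      ∑ j ∈ Finset.range (i + 1), Nat.totient (p ^ (k - j)) = p ^ k - p ^ (k - (i + 1)) := by
  intro i
  induction i with
  | zero =>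
    intro h
    rw [Finset.sum_range_one, Nat.sub_zero, totient_pp hp (by omega)]
  | succ m ih =>
    intro h
    rw [Finset.sum_range_succ, ih (by omega), totient_pp hp (by omega)]
    have e1 : p ^ (k - (m + 1) - 1) = p ^ (k - (m + 1 + 1)) := by congr 1
    rw [e1]
    have h2 : p ^ (k - (m + 1 + 1)) ≤ p ^ (k - (m + 1)) := Nat.pow_le_pow_right hp.pos (by omega)
    have h3 : p ^ (k - (m + 1)) ≤ p ^ k := Nat.pow_le_pow_right hp.pos (by omega)
    omega

lemma natCast_dvd_of_dvd_val {n c : ℕ} [NeZero n] {y : ZMod n} (h : c ∣ y.val) :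
    (c : ZMod n) ∣ y := by
  obtain ⟨m, hm⟩ := h
  refine ⟨(m : ZMod n), ?_⟩
  rw [← ZMod.natCast_zmod_val y, hm]
  push_cast
  ring

lemma part_two {s p k : ℕ} (hs : 1 ≤ s) (hp : p.Prime) (hk : 2 * s ≤ k)
    (e : (ZMod (p ^ k))ˣ)
    (he : (e : ZMod (p ^ k)) = (p : ZMod (p ^ k)) ^ (k - s) + 1) :
    ∀ α : ZMod (p ^ k), α ≠ 0 →
      ∃ i < s,
        {x : ZMod (p ^ k) |
            coset (Subgroup.zpowers e) (x + α) = coset (Subgroup.zpowers e) x}.ncard = 0 ∨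
        {x : ZMod (p ^ k) |
            coset (Subgroup.zpowers e) (x + α) = coset (Subgroup.zpowers e) x}.ncard
          = ∑ j ∈ Finset.range (i + 1), Nat.totient (p ^ (k - j)) := by
  haveI : NeZero (p ^ k) := ⟨pow_ne_zero k hp.pos.ne'⟩
  intro α hα
  set q : ZMod (p ^ k) := (p : ZMod (p ^ k)) ^ (k - s) with hq
  have hset : {x : ZMod (p ^ k) |
      coset (Subgroup.zpowers e) (x + α) = coset (Subgroup.zpowers e) x} = {x | x * q ∣ α} := by
    ext x
    rw [Set.mem_setOf_eq, coset_eq_iff, coset_zpowers_eq hp hk e he x, Set.mem_setOf_eq,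
      Set.mem_setOf_eq, add_sub_cancel_left]
  have hαv : α.val ≠ 0 := fun h => hα ((ZMod.val_eq_zero α).1 h)
  have cast_pow_dvd : ∀ (a : ℕ) (y : ZMod (p ^ k)), p ^ a ∣ y.val → (p : ZMod (p ^ k)) ^ a ∣ y := by
    intro a y h
    have h2 := natCast_dvd_of_dvd_val (n := p ^ k) (c := p ^ a) h
    push_cast at h2
    exact h2
  set w : ℕ := α.val.factorization p with hw
  have hwdvd : ∀ a : ℕ, p ^ a ∣ α.val ↔ a ≤ w := fun a =>
    Nat.Prime.pow_dvd_iff_le_factorization hp hαv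
  have hwk : w < k := by
    by_contra hc
    push_neg at hc
    have : p ^ k ∣ α.val := (hwdvd k).2 hc
    have h2 := Nat.le_of_dvd (Nat.pos_of_ne_zero hαv) this
    have h3 := ZMod.val_lt α
    omega
  -- characterization of the solution set
  have hchar : ∀ x : ZMod (p ^ k),
      x * q ∣ α ↔ (k - s ≤ w ∧ ¬ (p : ZMod (p ^ k)) ^ (w - (k - s) + 1) ∣ x) := by
    intro x
    constructor
    · intro hdvd
      have hx0 : x ≠ 0 := by
        rintro rfl
        rw [zero_mul, zero_dvd_iff] at hdvd
        exact hα hdvd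
      have hxv : x.val ≠ 0 := fun h => hx0 ((ZMod.val_eq_zero x).1 h)
      set v : ℕ := x.val.factorization p with hv
      have hvdvd : ∀ a : ℕ, p ^ a ∣ x.val ↔ a ≤ v := fun a =>
        Nat.Prime.pow_dvd_iff_le_factorization hp hxv
      have hvk : v < k := by
        by_contra hc
        push_neg at hc
        have h4 : p ^ k ∣ x.val := dvd_trans (pow_dvd_pow p hc) ((hvdvd v).2 le_rfl)
        have h5 := Nat.le_of_dvd (Nat.pos_of_ne_zero hxv) h4
        have h6 := ZMod.val_lt x
        have h7 : p ^ k ≤ p ^ k := le_rfl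
        omega
      have hd1 : (p : ZMod (p ^ k)) ^ v ∣ x := cast_pow_dvd v x ((hvdvd v).2 le_rfl)
      have hd2 : ¬ (p : ZMod (p ^ k)) ^ (v + 1) ∣ x := by
        intro hcon
        have := (zmod_pow_dvd_iff hp (by omega) x).1 hcon
        have := (hvdvd (v + 1)).1 this
        omega
      obtain ⟨-, u, hu⟩ := exists_unit_decomp hp hd1 hd2
      have hxq : x * q = (u : ZMod (p ^ k)) * (p : ZMod (p ^ k)) ^ (v + (k - s)) := by
        rw [hu, hq, pow_add]; ring
      rw [hxq, Units.mul_left_dvd] at hdvd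
      have hvw : v + (k - s) ≤ w := by
        by_cases hbig : v + (k - s) ≤ k
        · have := (zmod_pow_dvd_iff hp hbig α).1 hdvd
          exact (hwdvd _).1 this
        · exfalso
          push_neg at hbig
          rw [zmod_pow_hi_eq_zero hbig.le, zero_dvd_iff] at hdvd
          exact hα hdvd
      refine ⟨by omega, ?_⟩
      intro hcon
      have hik : w - (k - s) + 1 ≤ k := by omega
      have := (zmod_pow_dvd_iff hp hik x).1 hcon
      have := (hvdvd _).1 this
      omega
    · rintro ⟨hks, hnd⟩
      have hx0 : x ≠ 0 := by
        rintro rfl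
        exact hnd (dvd_zero _)
      have hxv : x.val ≠ 0 := fun h => hx0 ((ZMod.val_eq_zero x).1 h)
      set v : ℕ := x.val.factorization p with hv
      have hvdvd : ∀ a : ℕ, p ^ a ∣ x.val ↔ a ≤ v := fun a =>
        Nat.Prime.pow_dvd_iff_le_factorization hp hxv
      have hvi : v ≤ w - (k - s) := by
        by_contra hc
        push_neg at hc
        exact hnd (cast_pow_dvd (w - (k - s) + 1) x ((hvdvd (w - (k - s) + 1)).2 (by omega)))
      have hd1 : (p : ZMod (p ^ k)) ^ v ∣ x := cast_pow_dvd v x ((hvdvd v).2 le_rfl)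
      have hd2 : ¬ (p : ZMod (p ^ k)) ^ (v + 1) ∣ x := by
        intro hcon
        have hv1k : v + 1 ≤ k := by omega
        have := (zmod_pow_dvd_iff hp hv1k x).1 hcon
        have := (hvdvd (v + 1)).1 this
        omega
      obtain ⟨-, u, hu⟩ := exists_unit_decomp hp hd1 hd2
      have hxq : x * q = (u : ZMod (p ^ k)) * (p : ZMod (p ^ k)) ^ (v + (k - s)) := by
        rw [hu, hq, pow_add]; ring
      rw [hxq, Units.mul_left_dvd]
      exact cast_pow_dvd (v + (k - s)) α ((hwdvd (v + (k - s))).2 (by omega))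
  by_cases hcase : k - s ≤ w
  · refine ⟨w - (k - s), by omega, Or.inr ?_⟩
    have hik : w - (k - s) + 1 ≤ k := by omega
    rw [hset]
    have hsetc : {x : ZMod (p ^ k) | x * q ∣ α}
        = {x : ZMod (p ^ k) | (p : ZMod (p ^ k)) ^ (w - (k - s) + 1) ∣ x}ᶜ := by
      ext x
      rw [Set.mem_setOf_eq, hchar x, Set.mem_compl_iff, Set.mem_setOf_eq]
      exact ⟨fun h => h.2, fun h => ⟨hcase, h⟩⟩
    rw [hsetc, totient_sum hp _ (by omega)]
    have h1 := Set.ncard_add_ncard_compl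
      {x : ZMod (p ^ k) | (p : ZMod (p ^ k)) ^ (w - (k - s) + 1) ∣ x}
    have h2 := zmod_card_pow_dvd hp (k := k) (a := w - (k - s) + 1) hik
    rw [Nat.card_zmod] at h1
    omega
  · refine ⟨0, hs, Or.inl ?_⟩
    rw [hset]
    have : {x : ZMod (p ^ k) | x * q ∣ α} = ∅ := by
      ext x
      simp only [Set.mem_setOf_eq, Set.mem_empty_iff_false, iff_false]
      intro h
      exact hcase ((hchar x).1 h).1
    rw [this, Set.ncard_empty]

lemma arith_aux (p s X : ℕ) (hp : 1 ≤ p) :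
    s * (p * X - X) + p * X = (s * p + p - s) * X := by
  have h1 : s * (p * X - X) = s * (p * X) - s * X := Nat.mul_sub _ _ _
  have h2 : (s * p + p - s) * X = (s * p + p) * X - s * X := Nat.sub_mul _ _ _
  have h3 : s * X ≤ s * (p * X) :=
    Nat.mul_le_mul_left _ (Nat.le_mul_of_pos_left _ (by omega))
  have h4 : (s * p + p) * X = s * (p * X) + p * X := by ring
  omega

lemma part_one {s p k : ℕ} (hs : 1 ≤ s) (hp : p.Prime) (hk : 2 * s ≤ k)
    (e : (ZMod (p ^ k))ˣ)
    (he : (e : ZMod (p ^ k)) = (p : ZMod (p ^ k)) ^ (k - s) + 1) :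
    {S : Set (ZMod (p ^ k)) | ∃ x : ZMod (p ^ k), S = coset (Subgroup.zpowers e) x}.ncard
      = (s * p + p - s) * p ^ (k - s - 1) := by
  classical
  haveI : NeZero (p ^ k) := ⟨pow_ne_zero k hp.pos.ne'⟩
  set G := Subgroup.zpowers e with hG
  set F : ZMod (p ^ k) → Set (ZMod (p ^ k)) := fun x => coset G x with hF
  have cast_pow_dvd : ∀ (a : ℕ) (y : ZMod (p ^ k)), p ^ a ∣ y.val → (p : ZMod (p ^ k)) ^ a ∣ y := by
    intro a y h
    have h2 := natCast_dvd_of_dvd_val (n := p ^ k) (c := p ^ a) h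
    push_cast at h2
    exact h2
  -- divisibility is constant on cosets
  have hApres : ∀ (a : ℕ) (x y : ZMod (p ^ k)), y ∈ coset G x →
      ((p : ZMod (p ^ k)) ^ a ∣ y ↔ (p : ZMod (p ^ k)) ^ a ∣ x) := by
    intro a x y hy
    obtain ⟨g, _, rfl⟩ := hy
    exact Units.dvd_mul_right
  set A : ℕ → Finset (ZMod (p ^ k)) := fun v =>
    Finset.univ.filter
      (fun x => (p : ZMod (p ^ k)) ^ v ∣ x ∧ ¬ (p : ZMod (p ^ k)) ^ (v + 1) ∣ x) with hA
  set B : Finset (ZMod (p ^ k)) :=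
    Finset.univ.filter (fun x => (p : ZMod (p ^ k)) ^ s ∣ x) with hB
  have cnt : ∀ a : ℕ, a ≤ k →
      (Finset.univ.filter (fun x : ZMod (p ^ k) => (p : ZMod (p ^ k)) ^ a ∣ x)).card
        = p ^ (k - a) := by
    intro a ha
    rw [← zmod_card_pow_dvd hp ha, Set.ncard_eq_toFinset_card']
    congr 1
    ext x
    simp
  -- card of A v
  have hAcard : ∀ v, v < s → (A v).card = p ^ (k - v) - p ^ (k - (v + 1)) := by
    intro v hv
    have hsd : A v = (Finset.univ.filter (fun x : ZMod (p ^ k) => (p : ZMod (p ^ k)) ^ v ∣ x))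
        \ (Finset.univ.filter (fun x : ZMod (p ^ k) => (p : ZMod (p ^ k)) ^ (v + 1) ∣ x)) := by
      ext x
      simp only [hA, Finset.mem_filter, Finset.mem_sdiff, Finset.mem_univ, true_and]
    have hsub : (Finset.univ.filter (fun x : ZMod (p ^ k) => (p : ZMod (p ^ k)) ^ (v + 1) ∣ x))
        ⊆ (Finset.univ.filter (fun x : ZMod (p ^ k) => (p : ZMod (p ^ k)) ^ v ∣ x)) := by
      intro x hx
      simp only [Finset.mem_filter, Finset.mem_univ, true_and] at hx ⊢
      exact dvd_trans (pow_dvd_pow _ (Nat.le_succ v)) hx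
    rw [hsd, Finset.card_sdiff_of_subset hsub, cnt v (by omega), cnt (v + 1) (by omega)]
  -- cosets of elements of A v
  have hAcoset : ∀ v, v < s → ∀ x ∈ A v, (coset G x).ncard = p ^ (s - v) := by
    intro v hv x hx
    simp only [hA, Finset.mem_filter, Finset.mem_univ, true_and] at hx
    obtain ⟨hvk, u, hu⟩ := exists_unit_decomp hp hx.1 hx.2
    have hxq : x * (p : ZMod (p ^ k)) ^ (k - s)
        = (u : ZMod (p ^ k)) * (p : ZMod (p ^ k)) ^ (v + (k - s)) := by
      rw [hu, pow_add]; ring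
    have hco : coset G x
        = (fun z => x + z) '' {z : ZMod (p ^ k) | (p : ZMod (p ^ k)) ^ (v + (k - s)) ∣ z} := by
      rw [hG, coset_zpowers_eq hp hk e he x]
      ext y
      simp only [Set.mem_setOf_eq, Set.mem_image, hxq, Units.mul_left_dvd]
      constructor
      · intro hdy
        exact ⟨y - x, hdy, by ring⟩
      · rintro ⟨z, hz, rfl⟩
        simpa using hz
    rw [hco, Set.ncard_image_of_injective _ (add_right_injective x),
      zmod_card_pow_dvd hp (by omega : v + (k - s) ≤ k)]
    congr 1
    omega
  -- fibers of F over A v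
  have hfib : ∀ v, v < s → ∀ x ∈ A v,
      ((A v).filter (fun x' => F x' = F x)).card = p ^ (s - v) := by
    intro v hv x hx
    have hxA := hx
    simp only [hA, Finset.mem_filter, Finset.mem_univ, true_and] at hxA
    have : ((A v).filter (fun x' => F x' = F x)) = (coset G x).toFinset := by
      ext x'
      simp only [Finset.mem_filter, Set.mem_toFinset]
      constructor
      · rintro ⟨_, hFx⟩
        exact coset_eq_iff.1 hFx
      · intro hmem
        refine ⟨?_, coset_eq_of_mem hmem⟩
        simp only [hA, Finset.mem_filter, Finset.mem_univ, true_and]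
        exact ⟨(hApres v x x' hmem).2 hxA.1,
          fun hcon => hxA.2 ((hApres (v + 1) x x' hmem).1 hcon)⟩
    rw [this, ← Set.ncard_eq_toFinset_card', hAcoset v hv x hx]
  -- image cards
  have himcard : ∀ v, v < s → ((A v).image F).card = p ^ (k - s) - p ^ (k - s - 1) := by
    intro v hv
    have h1 : (A v).card = ∑ S ∈ (A v).image F, ((A v).filter (fun x => F x = S)).card :=
      Finset.card_eq_sum_card_fiberwise (fun x hx => Finset.mem_image_of_mem F hx)
    have h2 : ∑ S ∈ (A v).image F, ((A v).filter (fun x => F x = S)).card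
        = ((A v).image F).card * p ^ (s - v) := by
      rw [Finset.sum_congr rfl (fun S hS => ?_), Finset.sum_const, smul_eq_mul]
      obtain ⟨x, hx, rfl⟩ := Finset.mem_image.1 hS
      exact hfib v hv x hx
    have h3 : (p ^ (k - s) - p ^ (k - s - 1)) * p ^ (s - v)
        = p ^ (k - v) - p ^ (k - (v + 1)) := by
      rw [Nat.sub_mul, ← pow_add, ← pow_add]
      congr 2 <;> omega
    have h4 : ((A v).image F).card * p ^ (s - v)
        = (p ^ (k - s) - p ^ (k - s - 1)) * p ^ (s - v) := by
      rw [h3, ← hAcard v hv, h1, h2]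
    exact Nat.eq_of_mul_eq_mul_right (pow_pos hp.pos _) h4
  -- B : singleton cosets
  have hBsing : ∀ x ∈ B, coset G x = {x} := by
    intro x hx
    simp only [hB, Finset.mem_filter, Finset.mem_univ, true_and] at hx
    obtain ⟨t, rfl⟩ := hx
    have hzero : (p : ZMod (p ^ k)) ^ s * t * (p : ZMod (p ^ k)) ^ (k - s) = 0 := by
      have h5 : (p : ZMod (p ^ k)) ^ s * (p : ZMod (p ^ k)) ^ (k - s)
          = (p : ZMod (p ^ k)) ^ k := by
        rw [← pow_add]
        congr 1
        omega
      calc (p : ZMod (p ^ k)) ^ s * t * (p : ZMod (p ^ k)) ^ (k - s)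
          = ((p : ZMod (p ^ k)) ^ s * (p : ZMod (p ^ k)) ^ (k - s)) * t := by ring
        _ = (p : ZMod (p ^ k)) ^ k * t := by rw [h5]
        _ = 0 := by rw [zmod_pow_hi_eq_zero le_rfl, zero_mul]
    rw [hG, coset_zpowers_eq hp hk e he]
    ext y
    simp only [Set.mem_setOf_eq, hzero, zero_dvd_iff, sub_eq_zero, Set.mem_singleton_iff]
  have hBim : (B.image F).card = p ^ (k - s) := by
    rw [Finset.card_image_of_injOn, hB, cnt s (by omega)]
    intro x hx y hy hxy
    have := hBsing x hx
    have h2 := hBsing y hy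
    rw [hF] at hxy
    simp only at hxy
    rw [this, h2] at hxy
    exact Set.singleton_eq_singleton_iff.1 hxy
  -- decomposition of the image
  have hAdisjelem : ∀ v v', v ≠ v' → ∀ z, z ∈ A v → z ∈ A v' → False := by
    intro v v' hne z h1 h2
    simp only [hA, Finset.mem_filter, Finset.mem_univ, true_and] at h1 h2
    rcases Nat.lt_or_ge v v' with h | h
    · exact h1.2 (dvd_trans (pow_dvd_pow _ (by omega)) h2.1)
    · exact h2.2 (dvd_trans (pow_dvd_pow _ (by omega)) h1.1)
  have hcover : Finset.univ.image F
      = ((Finset.range s).biUnion (fun v => (A v).image F)) ∪ B.image F := by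
    ext S
    simp only [Finset.mem_union, Finset.mem_biUnion, Finset.mem_image, Finset.mem_univ, true_and,
      Finset.mem_range]
    constructor
    · rintro ⟨x, rfl⟩
      by_cases hxs : (p : ZMod (p ^ k)) ^ s ∣ x
      · exact Or.inr ⟨x, by simp [hB, hxs], rfl⟩
      · have hx0 : x ≠ 0 := by rintro rfl; exact hxs (dvd_zero _)
        have hxv : x.val ≠ 0 := fun h => hx0 ((ZMod.val_eq_zero x).1 h)
        set v : ℕ := x.val.factorization p with hv
        have hvdvd : ∀ a : ℕ, p ^ a ∣ x.val ↔ a ≤ v := fun a =>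
          Nat.Prime.pow_dvd_iff_le_factorization hp hxv
        have hvs : v < s := by
          by_contra hc
          push_neg at hc
          exact hxs (cast_pow_dvd s x ((hvdvd s).2 hc))
        have hd1 : (p : ZMod (p ^ k)) ^ v ∣ x := cast_pow_dvd v x ((hvdvd v).2 le_rfl)
        have hd2 : ¬ (p : ZMod (p ^ k)) ^ (v + 1) ∣ x := by
          intro hcon
          have := (zmod_pow_dvd_iff hp (by omega : v + 1 ≤ k) x).1 hcon
          have := (hvdvd (v + 1)).1 this
          omega
        exact Or.inl ⟨v, hvs, x, by simp [hA, hd1, hd2], rfl⟩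
    · rintro (⟨v, _, x, _, rfl⟩ | ⟨x, _, rfl⟩) <;> exact ⟨x, rfl⟩
  have hmemA_of_coset : ∀ v x x', x ∈ A v → x' ∈ coset G x → x' ∈ A v := by
    intro v x x' hx hmem
    simp only [hA, Finset.mem_filter, Finset.mem_univ, true_and] at hx ⊢
    exact ⟨(hApres v x x' hmem).2 hx.1, fun hcon => hx.2 ((hApres (v + 1) x x' hmem).1 hcon)⟩
  have hdisj1 : ∀ v ∈ Finset.range s, ∀ v' ∈ Finset.range s, v ≠ v' →
      Disjoint ((A v).image F) ((A v').image F) := by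
    intro v _ v' _ hne
    rw [Finset.disjoint_left]
    rintro S hS hS'
    obtain ⟨x, hx, rfl⟩ := Finset.mem_image.1 hS
    obtain ⟨x', hx', hFx⟩ := Finset.mem_image.1 hS'
    have hmem : x' ∈ coset G x := coset_eq_iff.1 hFx
    exact hAdisjelem v' v hne.symm x' hx' (hmemA_of_coset v x x' hx hmem)
  have hdisj2 : Disjoint ((Finset.range s).biUnion (fun v => (A v).image F)) (B.image F) := by
    rw [Finset.disjoint_left]
    rintro S hS hS'
    obtain ⟨v, hv, hSv⟩ := Finset.mem_biUnion.1 hS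
    obtain ⟨x, hx, rfl⟩ := Finset.mem_image.1 hSv
    obtain ⟨x', hx', hFx⟩ := Finset.mem_image.1 hS'
    have hmem : x' ∈ coset G x := coset_eq_iff.1 hFx
    have hx'A := hmemA_of_coset v x x' hx hmem
    simp only [hA, Finset.mem_filter, Finset.mem_univ, true_and] at hx'A
    simp only [hB, Finset.mem_filter, Finset.mem_univ, true_and] at hx'
    rw [Finset.mem_range] at hv
    exact hx'A.2 (dvd_trans (pow_dvd_pow _ (by omega)) hx')
  -- put everything together
  have hset : {S : Set (ZMod (p ^ k)) | ∃ x : ZMod (p ^ k), S = coset (Subgroup.zpowers e) x}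
      = ↑(Finset.univ.image F) := by
    ext S
    simp only [Set.mem_setOf_eq, Finset.coe_image, Finset.coe_univ, Set.image_univ,
      Set.mem_range]
    exact ⟨fun ⟨x, hx⟩ => ⟨x, hx.symm⟩, fun ⟨x, hx⟩ => ⟨x, hx.symm⟩⟩
  rw [hset, Set.ncard_coe_finset, hcover, Finset.card_union_of_disjoint hdisj2,
    Finset.card_biUnion hdisj1, hBim]
  rw [Finset.sum_congr rfl (fun v hv => himcard v (Finset.mem_range.1 hv)), Finset.sum_const,
    Finset.card_range, smul_eq_mul]
  have hpow : p ^ (k - s) = p * p ^ (k - s - 1) := by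
    rw [← pow_succ']
    congr 1
    omega
  rw [hpow]
  exact arith_aux p s (p ^ (k - s - 1)) hp.one_le

theorem stmt_13 (s : ℕ) (hs : 1 ≤ s) (p : ℕ) (hp : p.Prime) (k : ℕ) (hk : 2 * s ≤ k)
    (e : (ZMod (p ^ k))ˣ)
    (he : (e : ZMod (p ^ k)) = (p : ZMod (p ^ k)) ^ (k - s) + 1) :
    {S : Set (ZMod (p ^ k)) | ∃ x : ZMod (p ^ k), S = coset (Subgroup.zpowers e) x}.ncard
        = (s * p + p - s) * p ^ (k - s - 1) ∧
      ∀ α : ZMod (p ^ k), α ≠ 0 →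
        ∃ i < s,
          {x : ZMod (p ^ k) |
              coset (Subgroup.zpowers e) (x + α) = coset (Subgroup.zpowers e) x}.ncard = 0 ∨
          {x : ZMod (p ^ k) |
              coset (Subgroup.zpowers e) (x + α) = coset (Subgroup.zpowers e) x}.ncard
            = ∑ j ∈ Finset.range (i + 1), Nat.totient (p ^ (k - j)) := by
  exact ⟨part_one hs hp hk e he, part_two hs hp hk e he⟩
end
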